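/- arXiv:math/0703508 — 3 statements merged into one kernel-verified Lean document; each statement's English description precedes it below -/
import Mathlib

section
/- Let P be a finite set of prime numbers and let δ_P = ∏_{p∈P}(1 − 1/p). Then the limit γ(P) := lim_{x→∞} ( Σ_{n ≤ x, gcd(n, ∏_{p∈P} p)=1} 1/n − δ_P·log x ) exists and equals ∏_{p∈P}(1 − 1/p) · ( γ + Σ_{p∈P} (log p)/(p − 1) ), where γ is Euler's constant. -/
open Filter Real Finset

/-- The coprime-to-`m` harmonic sum up to `x`. -/
noncomputable def SP (m : ℕ) (x : ℝ) : ℝ :=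
  ∑ n ∈ Finset.Icc 1 ⌊x⌋₊, if Nat.Coprime n m then (1 : ℝ) / n else 0

lemma harmonic_real (N : ℕ) : (harmonic N : ℝ) = ∑ n ∈ Finset.Icc 1 N, (1 : ℝ) / n := by
  rw [harmonic, Rat.cast_sum, ← Finset.Ico_add_one_right_eq_Icc, Finset.sum_Ico_eq_sum_range]
  simp [one_div, add_comm]

lemma tendsto_harm_real :
    Tendsto (fun x : ℝ => (∑ n ∈ Finset.Icc 1 ⌊x⌋₊, (1 : ℝ) / n) - Real.log x)
      atTop (nhds Real.eulerMascheroniConstant) := by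
  have h1 : Tendsto (fun x : ℝ => Real.eulerMascheroniSeq ⌊x⌋₊) atTop
      (nhds Real.eulerMascheroniConstant) :=
    Real.tendsto_eulerMascheroniSeq.comp tendsto_nat_floor_atTop
  have h2 : Tendsto (fun x : ℝ => Real.eulerMascheroniSeq' ⌊x⌋₊) atTop
      (nhds Real.eulerMascheroniConstant) :=
    Real.tendsto_eulerMascheroniSeq'.comp tendsto_nat_floor_atTop
  refine tendsto_of_tendsto_of_tendsto_of_le_of_le' h1 h2 ?_ ?_
  · filter_upwards [eventually_ge_atTop (1 : ℝ)] with x hx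
    have hN : (1 : ℕ) ≤ ⌊x⌋₊ := Nat.one_le_floor_iff x |>.mpr hx
    rw [Real.eulerMascheroniSeq, harmonic_real]
    have : Real.log x ≤ Real.log (⌊x⌋₊ + 1) :=
      Real.log_le_log (by linarith) (Nat.lt_floor_add_one x).le
    linarith
  · filter_upwards [eventually_ge_atTop (1 : ℝ)] with x hx
    have hN : (1 : ℕ) ≤ ⌊x⌋₊ := Nat.one_le_floor_iff x |>.mpr hx
    rw [Real.eulerMascheroniSeq', if_neg (by omega), harmonic_real]
    have hfl : Real.log (⌊x⌋₊ : ℝ) ≤ Real.log x :=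
      Real.log_le_log (by exact_mod_cast hN) (Nat.floor_le (by linarith))
    linarith

lemma SP_step (m p : ℕ) (hp : p.Prime) (hpm : Nat.Coprime p m) (x : ℝ) (hx : 0 ≤ x) :
    SP (p * m) x = SP m x - (1 / p) * SP m (x / p) := by
  have hp0 : (0 : ℕ) < p := hp.pos
  unfold SP
  have hfl : ⌊x / (p : ℝ)⌋₊ = ⌊x⌋₊ / p := by
    rw [← Nat.floor_div_natCast]
  rw [hfl]
  set N := ⌊x⌋₊ with hN
  -- split the coprimality condition
  have split : ∀ n : ℕ, (if Nat.Coprime n (p * m) then (1 : ℝ) / n else 0) =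
      (if Nat.Coprime n m then (1 : ℝ) / n else 0) -
      (if Nat.Coprime n m ∧ p ∣ n then (1 : ℝ) / n else 0) := by
    intro n
    have hcop : Nat.Coprime n (p * m) ↔ Nat.Coprime n p ∧ Nat.Coprime n m :=
      Nat.coprime_mul_iff_right
    have hnp : Nat.Coprime n p ↔ ¬ p ∣ n := by
      rw [Nat.coprime_comm]; exact hp.coprime_iff_not_dvd
    by_cases h1 : Nat.Coprime n m
    · by_cases h2 : p ∣ n
      · rw [if_neg (by rw [hcop, hnp]; tauto), if_pos h1, if_pos ⟨h1, h2⟩]; ring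
      · rw [if_pos (by rw [hcop, hnp]; exact ⟨h2, h1⟩), if_pos h1,
          if_neg (by tauto)]; ring
    · rw [if_neg (by rw [hcop]; tauto), if_neg h1, if_neg (by tauto)]; ring
  rw [Finset.sum_congr rfl (fun n _ => split n), Finset.sum_sub_distrib]
  congr 1
  -- now the divisible-by-p part
  rw [Finset.mul_sum]
  have himg : (Finset.Icc 1 N).filter (fun n => p ∣ n) =
      (Finset.Icc 1 (N / p)).image (fun k => p * k) := by
    ext n
    simp only [Finset.mem_filter, Finset.mem_image, Finset.mem_Icc]
    constructor
    · rintro ⟨⟨h1, h2⟩, k, rfl⟩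
      refine ⟨k, ⟨Nat.pos_of_ne_zero (by rintro rfl; simp at h1),
        Nat.le_div_iff_mul_le hp0 |>.mpr (by rwa [mul_comm])⟩, rfl⟩
    · rintro ⟨k, ⟨hk1, hk2⟩, rfl⟩
      exact ⟨⟨Nat.one_le_iff_ne_zero.mpr (Nat.mul_ne_zero hp0.ne' (by omega)),
        by rw [mul_comm]; exact (Nat.le_div_iff_mul_le hp0).mp hk2⟩, ⟨k, rfl⟩⟩
  have step1 : ∑ n ∈ Finset.Icc 1 N, (if Nat.Coprime n m ∧ p ∣ n then (1 : ℝ) / n else 0) =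
      ∑ n ∈ (Finset.Icc 1 N).filter (fun n => p ∣ n),
        (if Nat.Coprime n m then (1 : ℝ) / n else 0) := by
    rw [Finset.sum_filter]
    refine Finset.sum_congr rfl fun n _ => ?_
    by_cases h1 : Nat.Coprime n m <;> by_cases h2 : p ∣ n <;> simp [h1, h2]
  rw [step1, himg, Finset.sum_image (fun a _ b _ h => by
    exact Nat.eq_of_mul_eq_mul_left hp0 h)]
  refine Finset.sum_congr rfl fun k hk => ?_
  have hk1 : 1 ≤ k := (Finset.mem_Icc.mp hk).1
  have hcop : Nat.Coprime (p * k) m ↔ Nat.Coprime k m := by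
    rw [Nat.coprime_mul_iff_left]
    exact ⟨fun h => h.2, fun h => ⟨hpm, h⟩⟩
  by_cases h : Nat.Coprime k m
  · rw [if_pos (hcop.mpr h), if_pos h]
    push_cast
    rw [one_div, one_div, one_div, mul_inv]
  · rw [if_neg (fun hc => h (hcop.mp hc)), if_neg h]; ring

lemma main_aux (P : Finset ℕ) (hP : ∀ p ∈ P, p.Prime) :
    Tendsto (fun x : ℝ => SP (∏ p ∈ P, p) x - (∏ p ∈ P, (1 - 1 / (p : ℝ))) * Real.log x)
      atTop
      (nhds ((∏ p ∈ P, (1 - 1 / (p : ℝ))) *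
        (Real.eulerMascheroniConstant + ∑ p ∈ P, Real.log p / ((p : ℝ) - 1)))) := by
  induction P using Finset.cons_induction with
  | empty =>
    simp only [Finset.prod_empty, Finset.sum_empty, one_mul, add_zero]
    have : ∀ x : ℝ, SP 1 x = ∑ n ∈ Finset.Icc 1 ⌊x⌋₊, (1 : ℝ) / n := by
      intro x; unfold SP
      exact Finset.sum_congr rfl fun n _ => if_pos (Nat.coprime_one_right n)
    simpa only [this] using tendsto_harm_real
  | cons p P hpP ih =>
    have hp : p.Prime := hP p (Finset.mem_cons_self p P)
    have hPm : ∀ q ∈ P, q.Prime := fun q hq => hP q (Finset.mem_cons_of_mem hq)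
    have ih' := ih hPm
    set m := ∏ q ∈ P, q with hm
    set δ := ∏ q ∈ P, (1 - 1 / (q : ℝ)) with hδ
    set Ssum := ∑ q ∈ P, Real.log q / ((q : ℝ) - 1) with hSsum
    set γ := Real.eulerMascheroniConstant with hγ
    have hpm : Nat.Coprime p m := by
      refine Nat.Coprime.prod_right fun q hq => ?_
      exact (Nat.coprime_primes hp (hPm q hq)).mpr (fun h => hpP (h ▸ hq))
    have hp0 : (0 : ℝ) < p := by exact_mod_cast hp.pos
    have hp1 : (1 : ℝ) < p := by exact_mod_cast hp.one_lt
    rw [Finset.prod_cons, Finset.prod_cons, Finset.sum_cons]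
    -- limit of g(x/p)
    have hdiv : Tendsto (fun x : ℝ => x / p) atTop atTop :=
      tendsto_id.atTop_div_const hp0
    have ihdiv := ih'.comp hdiv
    have key : Tendsto
        (fun x : ℝ => (SP m x - δ * Real.log x)
          - (1 / p) * ((SP m (x / p)) - δ * Real.log (x / p)) + (δ / p) * Real.log p)
        atTop (nhds ((δ * (γ + Ssum)) - (1 / p) * (δ * (γ + Ssum)) + (δ / p) * Real.log p)) := by
      exact ((ih'.sub (ihdiv.const_mul _)).add tendsto_const_nhds)
    have heq : (fun x : ℝ => SP (p * m) x - (1 - 1 / (p : ℝ)) * δ * Real.log x) =ᶠ[atTop]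
        (fun x : ℝ => (SP m x - δ * Real.log x)
          - (1 / p) * ((SP m (x / p)) - δ * Real.log (x / p)) + (δ / p) * Real.log p) := by
      filter_upwards [eventually_gt_atTop (0 : ℝ)] with x hx
      rw [SP_step m p hp hpm x hx.le, Real.log_div hx.ne' (by positivity)]
      ring
    have hval : (δ * (γ + Ssum)) - (1 / p) * (δ * (γ + Ssum)) + (δ / p) * Real.log p
        = (1 - 1 / (p : ℝ)) * δ * (γ + (Real.log p / ((p : ℝ) - 1) + Ssum)) := by
      have h1 : (p : ℝ) ≠ 0 := hp0.ne'
      have h2 : (p : ℝ) - 1 ≠ 0 := by linarith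
      field_simp
      ring
    rw [← hval]
    exact key.congr' heq.symm

/-- For a finite set `P` of primes, the generalized Euler constant
`γ(P) = lim_{x→∞} ( ∑_{n ≤ x, (n, ∏_{p∈P} p) = 1} 1/n - δ_P log x )` exists and equals
`∏_{p∈P}(1 - 1/p) * (γ + ∑_{p∈P} log p/(p-1))`. -/
theorem gammaP_limit (P : Finset ℕ) (hP : ∀ p ∈ P, p.Prime) :
    Filter.Tendsto
      (fun x : ℝ =>
        (∑ n ∈ Finset.Icc 1 ⌊x⌋₊,
          if Nat.Coprime n (∏ p ∈ P, p) then (1 : ℝ) / n else 0) -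
        (∏ p ∈ P, (1 - 1 / (p : ℝ))) * Real.log x)
      Filter.atTop
      (nhds ((∏ p ∈ P, (1 - 1 / (p : ℝ))) *
        (Real.eulerMascheroniConstant + ∑ p ∈ P, Real.log p / ((p : ℝ) - 1)))) := by
  exact main_aux P hP
end

section
/- Let G = { γ(P) : P a finite set of primes } and Γ = inf G (the infimum exists since every γ(P) is positive). Then G is dense in [Γ, ∞); that is, the closure of G in ℝ equals the interval [Γ, ∞). -/
open Filter

/-- Generalized Euler constant for a finite set of primes `P`:
`γ(P) = ∏_{p∈P}(1 - 1/p) * (γ + ∑_{p∈P} log p / (p-1))`. -/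
noncomputable def gammaP (P : Finset ℕ) : ℝ :=
  (∏ p ∈ P, (1 - 1 / (p : ℝ))) *
    (Real.eulerMascheroniConstant + ∑ p ∈ P, Real.log p / ((p : ℝ) - 1))

/-- `γ_r = γ({p_1, …, p_r})`, the generalized Euler constant for the first `r` primes. -/
noncomputable def gammaR (r : ℕ) : ℝ :=
  gammaP ((Finset.range r).image (Nat.nth Nat.Prime))

/-- The set `G` of all generalized Euler constants `γ(P)`. -/
def Gset : Set ℝ := {y | ∃ P : Finset ℕ, (∀ p ∈ P, p.Prime) ∧ gammaP P = y}

namespace GammaAux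

open Real Finset

lemma two_le_cast {p : ℕ} (hp : p.Prime) : (2:ℝ) ≤ p := by exact_mod_cast hp.two_le

lemma gammaEM_pos : 0 < Real.eulerMascheroniConstant :=
  lt_trans (by norm_num) Real.one_half_lt_eulerMascheroniConstant

lemma factor_pos {p : ℕ} (hp : p.Prime) : 0 < 1 - 1/(p:ℝ) := by
  have h2 := two_le_cast hp
  have h : 1/(p:ℝ) ≤ 1/2 := by
    apply one_div_le_one_div_of_le <;> linarith
  linarith

lemma factor_le_one {p : ℕ} (hp : p.Prime) : 1 - 1/(p:ℝ) ≤ 1 := by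
  have h2 := two_le_cast hp
  have : 0 ≤ 1/(p:ℝ) := by positivity
  linarith

lemma prod_pos' {P : Finset ℕ} (hP : ∀ p ∈ P, p.Prime) :
    0 < ∏ p ∈ P, (1 - 1/(p:ℝ)) :=
  Finset.prod_pos fun p hp => factor_pos (hP p hp)

lemma prod_le_one' {P : Finset ℕ} (hP : ∀ p ∈ P, p.Prime) :
    ∏ p ∈ P, (1 - 1/(p:ℝ)) ≤ 1 :=
  Finset.prod_le_one (fun p hp => (factor_pos (hP p hp)).le)
    (fun p hp => factor_le_one (hP p hp))

lemma term_nonneg {p : ℕ} (hp : p.Prime) : 0 ≤ Real.log p / ((p:ℝ) - 1) := by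
  have h2 := two_le_cast hp
  exact div_nonneg (Real.log_nonneg (by linarith)) (by linarith)

lemma sum_nonneg' {P : Finset ℕ} (hP : ∀ p ∈ P, p.Prime) :
    0 ≤ ∑ p ∈ P, Real.log p / ((p:ℝ) - 1) :=
  Finset.sum_nonneg fun p hp => term_nonneg (hP p hp)

lemma gammaP_nonneg {P : Finset ℕ} (hP : ∀ p ∈ P, p.Prime) : 0 ≤ gammaP P :=
  mul_nonneg (prod_pos' hP).le (by linarith [gammaEM_pos, sum_nonneg' hP])

lemma gammaP_insert {P : Finset ℕ} {p : ℕ} (hp : p.Prime) (hpP : p ∉ P) :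
    gammaP (insert p P) = (1 - 1/(p:ℝ)) * gammaP P +
      (∏ q ∈ P, (1 - 1/(q:ℝ))) * (Real.log p / p) := by
  have h2 := two_le_cast hp
  have hp0 : (p:ℝ) ≠ 0 := by linarith
  have hp1 : (p:ℝ) - 1 ≠ 0 := by linarith
  unfold gammaP
  rw [Finset.prod_insert hpP, Finset.sum_insert hpP]
  field_simp
  ring

lemma gammaP_insert_le {P : Finset ℕ} (hP : ∀ p ∈ P, p.Prime) {p : ℕ}
    (hp : p.Prime) (hpP : p ∉ P) :
    gammaP (insert p P) ≤ gammaP P + Real.log p / p := by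
  rw [gammaP_insert hp hpP]
  have h2 := two_le_cast hp
  have h1 : 0 ≤ gammaP P := gammaP_nonneg hP
  have h3 : 0 ≤ Real.log p / p := div_nonneg (Real.log_nonneg (by linarith)) (by linarith)
  have h4 := prod_le_one' hP
  have h5 := (prod_pos' hP).le
  have h6 : 0 ≤ 1/(p:ℝ) := by positivity
  nlinarith

lemma exp_le_aux {x : ℝ} (hx : 0 < x) (hx2 : x ≤ 1/2) : Real.exp (-(2*x)) ≤ 1 - x := by
  have h1 : 1 + 2*x ≤ Real.exp (2*x) := by linarith [Real.add_one_le_exp (2*x)]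
  have h2 : (0:ℝ) < 1 + 2*x := by linarith
  have h3 : Real.exp (-(2*x)) = (Real.exp (2*x))⁻¹ := Real.exp_neg _
  rw [h3]
  have h4 : (Real.exp (2*x))⁻¹ ≤ (1 + 2*x)⁻¹ := by
    apply inv_anti₀ h2 h1
  refine h4.trans ?_
  rw [inv_le_iff_one_le_mul₀ h2]
  nlinarith

/-- Lower bound for `gammaP` on a union. -/
lemma gammaP_union_ge {P0 Q : Finset ℕ} (hP0 : ∀ p ∈ P0, p.Prime)
    (hQ : ∀ p ∈ Q, p.Prime) (hd : Disjoint P0 Q) {y : ℕ} (hy : 1 ≤ y)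
    (hQy : ∀ p ∈ Q, y ≤ p) :
    (∏ q ∈ P0, (1 - 1/(q:ℝ))) * Real.exp (-(2 * ∑ p ∈ Q, 1/(p:ℝ))) *
      (Real.log y * ∑ p ∈ Q, 1/(p:ℝ)) ≤ gammaP (P0 ∪ Q) := by
  set T : ℝ := ∑ p ∈ Q, 1/(p:ℝ) with hT
  have hT0 : 0 ≤ T := Finset.sum_nonneg fun p hp => by positivity
  have hy1 : (1:ℝ) ≤ y := by exact_mod_cast hy
  have hlogy : 0 ≤ Real.log y := Real.log_nonneg hy1
  -- exp part
  have hexp : Real.exp (-(2 * T)) ≤ ∏ p ∈ Q, (1 - 1/(p:ℝ)) := by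
    have : Real.exp (-(2 * T)) = ∏ p ∈ Q, Real.exp (-(2 * (1/(p:ℝ)))) := by
      rw [← Real.exp_sum]
      congr 1
      rw [hT, Finset.mul_sum, ← Finset.sum_neg_distrib]
    rw [this]
    apply Finset.prod_le_prod (fun p hp => (Real.exp_pos _).le)
    intro p hp
    have h2 := two_le_cast (hQ p hp)
    have hp0 : (0:ℝ) < 1/(p:ℝ) := by positivity
    have hp2 : 1/(p:ℝ) ≤ 1/2 := by
      apply one_div_le_one_div_of_le <;> linarith
    exact exp_le_aux hp0 hp2
  -- sum part
  have hsum : Real.log y * T ≤ ∑ p ∈ Q, Real.log p / ((p:ℝ) - 1) := by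
    rw [hT, Finset.mul_sum]
    apply Finset.sum_le_sum
    intro p hp
    have h2 := two_le_cast (hQ p hp)
    have hyp : (y:ℝ) ≤ p := by exact_mod_cast hQy p hp
    have hlp : Real.log y ≤ Real.log p := Real.log_le_log (by linarith) hyp
    have h1 : Real.log y * (1/(p:ℝ)) = Real.log y / p := by ring
    rw [h1]
    exact div_le_div₀ (Real.log_nonneg (by linarith)) hlp (by linarith) (by linarith)
  -- combine
  have hprodQ0 : 0 ≤ ∏ p ∈ Q, (1 - 1/(p:ℝ)) := (prod_pos' hQ).le
  have hP0pos : 0 < ∏ q ∈ P0, (1 - 1/(q:ℝ)) := prod_pos' hP0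
  have hsum0 : 0 ≤ ∑ p ∈ P0, Real.log p / ((p:ℝ) - 1) := sum_nonneg' hP0
  have hγ := gammaEM_pos
  unfold gammaP
  rw [Finset.prod_union hd, Finset.sum_union hd]
  have hlhs : Real.log y * T ≤ Real.eulerMascheroniConstant +
      (∑ p ∈ P0, Real.log p / ((p:ℝ) - 1) + ∑ p ∈ Q, Real.log p / ((p:ℝ) - 1)) := by
    linarith
  have hlT0 : 0 ≤ Real.log y * T := mul_nonneg hlogy hT0
  have hexp0 : 0 ≤ Real.exp (-(2 * T)) := (Real.exp_pos _).le
  calc (∏ q ∈ P0, (1 - 1/(q:ℝ))) * Real.exp (-(2 * T)) * (Real.log y * T)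
      ≤ (∏ q ∈ P0, (1 - 1/(q:ℝ))) * (∏ p ∈ Q, (1 - 1/(p:ℝ))) * (Real.log y * T) := by
        apply mul_le_mul_of_nonneg_right _ hlT0
        exact mul_le_mul_of_nonneg_left hexp hP0pos.le
    _ ≤ (∏ q ∈ P0, (1 - 1/(q:ℝ))) * (∏ p ∈ Q, (1 - 1/(p:ℝ))) *
        (Real.eulerMascheroniConstant +
          (∑ p ∈ P0, Real.log p / ((p:ℝ) - 1) + ∑ p ∈ Q, Real.log p / ((p:ℝ) - 1))) := by
        apply mul_le_mul_of_nonneg_left hlhs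
        exact mul_nonneg hP0pos.le hprodQ0

/-- Tail sums of prime reciprocals reach `1/2`. -/
lemma exists_half_le (y : ℕ) :
    ∃ k, 1/2 ≤ ∑ p ∈ (Finset.Ioc y (y+k)).filter Nat.Prime, (1/(p:ℝ)) := by
  classical
  by_contra h
  push_neg at h
  set g : ℕ → ℝ := fun n => if n.Prime ∧ y < n then 1/(n:ℝ) else 0 with hg
  have hg0 : ∀ n, 0 ≤ g n := by
    intro n; rw [hg]; dsimp only; split <;> positivity
  have hgsum : Summable g := by
    apply summable_of_sum_range_le hg0 (c := 1/2)
    intro n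
    have hsub : (Finset.range n).filter (fun i => i.Prime ∧ y < i) ⊆
        (Finset.Ioc y (y+n)).filter Nat.Prime := by
      intro a ha
      simp only [Finset.mem_filter, Finset.mem_range, Finset.mem_Ioc] at *
      exact ⟨⟨ha.2.2, by omega⟩, ha.2.1⟩
    calc ∑ i ∈ Finset.range n, g i
        = ∑ i ∈ (Finset.range n).filter (fun i => i.Prime ∧ y < i), 1/(i:ℝ) := by
          rw [Finset.sum_filter]
      _ ≤ ∑ p ∈ (Finset.Ioc y (y+n)).filter Nat.Prime, 1/(p:ℝ) :=
          Finset.sum_le_sum_of_subset_of_nonneg hsub (fun i _ _ => by positivity)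
      _ ≤ 1/2 := (h n).le
  have hfin : Summable (fun n : ℕ => if n.Prime ∧ n ≤ y then 1/(n:ℝ) else 0) := by
    apply summable_of_ne_finset_zero (s := Finset.range (y+1))
    intro n hn
    simp only [Finset.mem_range, not_lt] at hn
    have : ¬(n.Prime ∧ n ≤ y) := by intro ⟨_, h'⟩; omega
    simp [this]
  have hall : Summable (Set.indicator {p | Nat.Prime p} (fun n : ℕ => (1:ℝ)/n)) := by
    apply (hfin.add hgsum).congr
    intro n
    rw [hg]
    simp only [Set.indicator_apply, Set.mem_setOf_eq]
    by_cases hp : n.Prime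
    · by_cases hyn : y < n
      · have : ¬(n.Prime ∧ n ≤ y) := by intro ⟨_, h'⟩; omega
        simp [this, hp, hyn]
      · have : n.Prime ∧ n ≤ y := ⟨hp, by omega⟩
        simp [this, hp, hyn]
    · simp [hp]
  exact not_summable_one_div_on_primes hall

lemma reach (P0 : Finset ℕ) (hP0 : ∀ p ∈ P0, p.Prime) {t ε : ℝ} (hε : 0 < ε)
    (ht0 : gammaP P0 ≤ t) :
    ∃ P : Finset ℕ, (∀ p ∈ P, p.Prime) ∧ t < gammaP P ∧ gammaP P < t + ε := by
  classical
  have hγ := gammaEM_pos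
  set Pi0 : ℝ := ∏ q ∈ P0, (1 - 1/(q:ℝ)) with hPi0def
  have hPi0 : 0 < Pi0 := prod_pos' hP0
  set c : ℝ := Pi0 * Real.exp (-2) with hcdef
  have hc : 0 < c := mul_pos hPi0 (Real.exp_pos _)
  set A : ℝ := 2 * (|t| + 1) / c with hAdef
  have hA0 : 0 < A := by
    have : 0 < |t| + 1 := by positivity
    exact div_pos (by linarith) hc
  -- choose y
  set y : ℕ := max (max 3 (⌈(2/ε)^2⌉₊ + 1)) (max (P0.sup id) (⌈Real.exp A⌉₊ + 1)) with hydef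
  have hy3 : 3 ≤ y := le_trans (le_max_left _ _) (le_max_left _ _)
  have hy1 : 1 ≤ y := by omega
  have hyR : (3:ℝ) ≤ (y:ℝ) := by exact_mod_cast hy3
  have h0y : (0:ℝ) < y := by linarith
  have hlogy0 : 0 ≤ Real.log y := Real.log_nonneg (by linarith)
  have hyP0 : ∀ q ∈ P0, q ≤ y := fun q hq =>
    le_trans (Finset.le_sup (f := id) hq) (le_trans (le_max_left _ _) (le_max_right _ _))
  -- log y / y < ε
  have hlogsmall : Real.log y / y < ε := by
    have hyc : ((⌈(2/ε)^2⌉₊ + 1 : ℕ) : ℝ) ≤ y := by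
      exact_mod_cast le_trans (le_max_right _ _) (le_max_left _ _)
    have hsqrt_pos : 0 < Real.sqrt y := Real.sqrt_pos.mpr h0y
    have hlog2 : Real.log y ≤ 2 * Real.sqrt y := by
      have h1 := Real.log_sqrt h0y.le
      have h2 := Real.log_le_sub_one_of_pos hsqrt_pos
      linarith
    have hsq : 2/ε < Real.sqrt y := by
      apply (Real.lt_sqrt (by positivity)).mpr
      have hle : ((2/ε)^2 : ℝ) ≤ (⌈(2/ε)^2⌉₊ : ℝ) := Nat.le_ceil _
      push_cast at hyc
      linarith
    have hsqs : Real.sqrt y * Real.sqrt y = y := Real.mul_self_sqrt h0y.le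
    rw [div_lt_iff₀ h0y]
    have h5 : (2/ε) * Real.sqrt y < (y:ℝ) := by
      nlinarith [mul_lt_mul_of_pos_right hsq hsqrt_pos]
    have h6 : ε * ((2/ε) * Real.sqrt y) = 2 * Real.sqrt y := by field_simp
    have h7 : 2 * Real.sqrt y < ε * y := by
      calc 2 * Real.sqrt y = ε * ((2/ε) * Real.sqrt y) := h6.symm
        _ < ε * y := by exact mul_lt_mul_of_pos_left h5 hε
    linarith
  -- the target bound for T ∈ [1/2, 1]
  have hybig : ∀ T : ℝ, 1/2 ≤ T → T ≤ 1 →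
      t < Pi0 * Real.exp (-(2*T)) * (Real.log y * T) := by
    intro T hT1 hT2
    have hlogA : A < Real.log y := by
      have h1 : Real.exp A < y := by
        have h2 : ((⌈Real.exp A⌉₊ + 1 : ℕ):ℝ) ≤ y := by
          exact_mod_cast le_trans (le_max_right _ _) (le_max_right _ _)
        push_cast at h2
        linarith [Nat.le_ceil (Real.exp A)]
      calc A = Real.log (Real.exp A) := (Real.log_exp A).symm
        _ < Real.log y := Real.log_lt_log (Real.exp_pos _) h1
    have hexpT : Real.exp (-2) ≤ Real.exp (-(2*T)) := Real.exp_le_exp.mpr (by linarith)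
    have hkey : c * (A * (1/2)) = |t| + 1 := by
      rw [hAdef]; field_simp
    have h1 : A * (1/2) ≤ Real.log y * T := by nlinarith
    have hstep1 : c * (A * (1/2)) ≤ Pi0 * Real.exp (-(2*T)) * (Real.log y * T) := by
      rw [hcdef]
      have h3 : (0:ℝ) ≤ A * (1/2) := by positivity
      have e1 : Pi0 * Real.exp (-2) * (A*(1/2)) ≤ Pi0 * Real.exp (-(2*T)) * (A*(1/2)) :=
        mul_le_mul_of_nonneg_right (mul_le_mul_of_nonneg_left hexpT hPi0.le) h3
      have e2 : Pi0 * Real.exp (-(2*T)) * (A*(1/2)) ≤ Pi0 * Real.exp (-(2*T)) * (Real.log y * T) :=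
        mul_le_mul_of_nonneg_left h1 (by positivity)
      linarith
    have h2 : t < |t| + 1 := by cases abs_cases t <;> linarith
    linarith [hkey ▸ hstep1]
  -- the process
  set Q : ℕ → Finset ℕ := fun k => (Finset.Ioc y (y+k)).filter Nat.Prime with hQdef
  have hQprime : ∀ k, ∀ p ∈ Q k, p.Prime := fun k p hp => (Finset.mem_filter.mp hp).2
  have hQgt : ∀ k, ∀ p ∈ Q k, y < p := fun k p hp =>
    (Finset.mem_Ioc.mp (Finset.mem_filter.mp hp).1).1
  have hdis : ∀ k, Disjoint P0 (Q k) := by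
    intro k
    rw [Finset.disjoint_left]
    intro a haP haQ
    have h1 := hyP0 a haP
    have h2 := hQgt k a haQ
    omega
  set F : ℕ → Finset ℕ := fun k => P0 ∪ Q k with hFdef
  have hFprime : ∀ k, ∀ p ∈ F k, p.Prime := by
    intro k p hp
    rcases Finset.mem_union.mp hp with h | h
    · exact hP0 p h
    · exact hQprime k p h
  have hF0 : F 0 = P0 := by simp [hFdef, hQdef]
  have hQsucc : ∀ k, (y+k+1).Prime → Q (k+1) = insert (y+k+1) (Q k) := by
    intro k hp
    ext a
    simp only [hQdef, Finset.mem_filter, Finset.mem_Ioc, Finset.mem_insert]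
    constructor
    · rintro ⟨⟨h1, h2⟩, h3⟩
      by_cases ha : a = y+k+1
      · exact Or.inl ha
      · exact Or.inr ⟨⟨h1, by omega⟩, h3⟩
    · rintro (rfl | ⟨⟨h1, h2⟩, h3⟩)
      · exact ⟨⟨by omega, by omega⟩, hp⟩
      · exact ⟨⟨h1, by omega⟩, h3⟩
  have hQsucc' : ∀ k, ¬(y+k+1).Prime → Q (k+1) = Q k := by
    intro k hp
    ext a
    simp only [hQdef, Finset.mem_filter, Finset.mem_Ioc]
    constructor
    · rintro ⟨⟨h1, h2⟩, h3⟩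
      refine ⟨⟨h1, ?_⟩, h3⟩
      by_cases ha : a = y+k+1
      · exact absurd (ha ▸ h3) hp
      · omega
    · rintro ⟨⟨h1, h2⟩, h3⟩
      exact ⟨⟨h1, by omega⟩, h3⟩
  have hnotmem : ∀ k, (y+k+1) ∉ F k := by
    intro k hmem
    rcases Finset.mem_union.mp hmem with h | h
    · have := hyP0 _ h; omega
    · have := hQgt k _ h
      have := (Finset.mem_Ioc.mp (Finset.mem_filter.mp h).1).2
      omega
  have hstep : ∀ k, gammaP (F (k+1)) ≤ gammaP (F k) + Real.log y / y := by
    intro k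
    by_cases hp : (y+k+1).Prime
    · have hF : F (k+1) = insert (y+k+1) (F k) := by
        simp only [hFdef]
        rw [hQsucc k hp, Finset.union_insert]
      rw [hF]
      have h1 := gammaP_insert_le (hFprime k) hp (hnotmem k)
      have h2 : Real.log ((y+k+1 : ℕ) : ℝ) / ((y+k+1 : ℕ):ℝ) ≤ Real.log y / y := by
        have hd9 := Real.exp_one_lt_d9
        have he : Real.exp 1 ≤ (y:ℝ) := by linarith
        have hyp : (y:ℝ) ≤ ((y+k+1:ℕ):ℝ) := by push_cast; linarith
        have he2 : Real.exp 1 ≤ ((y+k+1:ℕ):ℝ) := le_trans he hyp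
        exact Real.log_div_self_antitoneOn (Set.mem_setOf.mpr he)
          (Set.mem_setOf.mpr he2) hyp
      linarith
    · have hF : F (k+1) = F k := by
        simp only [hFdef]
        rw [hQsucc' k hp]
      rw [hF]
      have : 0 ≤ Real.log y / y := by positivity
      linarith
  -- T reaches [1/2, 1]
  set T : ℕ → ℝ := fun k => ∑ p ∈ Q k, 1/(p:ℝ) with hTdef
  have hexT : ∃ k, 1/2 ≤ T k := exists_half_le y
  set k1 := Nat.find hexT with hk1def
  have hk1 : 1/2 ≤ T k1 := Nat.find_spec hexT
  have hk1ne : k1 ≠ 0 := by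
    intro h
    have hT0 : T 0 = 0 := by simp [hTdef, hQdef]
    rw [h, hT0] at hk1
    norm_num at hk1
  obtain ⟨m, hm⟩ := Nat.exists_eq_succ_of_ne_zero hk1ne
  have hTm : T m < 1/2 := by
    have := Nat.find_min hexT (m := m) (by omega)
    linarith [not_le.mp this]
  have hTk1 : T k1 ≤ 1 := by
    rw [hm]
    by_cases hp : (y+m+1).Prime
    · have hnm : (y+m+1) ∉ Q m := by
        intro hmem
        have := (Finset.mem_Ioc.mp (Finset.mem_filter.mp hmem).1).2
        omega
      have hTsucc : T (m+1) = 1/(((y+m+1:ℕ)):ℝ) + T m := by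
        simp only [hTdef]
        rw [hQsucc m hp, Finset.sum_insert hnm]
      rw [hTsucc]
      have h2 : (2:ℝ) ≤ ((y+m+1:ℕ):ℝ) := by push_cast; linarith
      have h3 : 1/(((y+m+1:ℕ)):ℝ) ≤ 1/2 := by
        apply one_div_le_one_div_of_le <;> linarith
      linarith
    · have hTsucc : T (m+1) = T m := by
        simp only [hTdef]
        rw [hQsucc' m hp]
      rw [hTsucc]; linarith
  -- value exceeds t at k1
  have hbig : t < gammaP (F k1) := by
    have hlow := gammaP_union_ge hP0 (hQprime k1) (hdis k1) hy1
      (fun p hp => (hQgt k1 p hp).le)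
    have h1 := hybig (T k1) hk1 hTk1
    calc t < Pi0 * Real.exp (-(2 * T k1)) * (Real.log y * T k1) := h1
      _ ≤ gammaP (F k1) := hlow
  -- first crossing
  have hexC : ∃ k, t < gammaP (F k) := ⟨k1, hbig⟩
  set n := Nat.find hexC with hndef
  have hn : t < gammaP (F n) := Nat.find_spec hexC
  have hnne : n ≠ 0 := by
    intro h
    rw [h, hF0] at hn
    linarith
  obtain ⟨n', hn'⟩ := Nat.exists_eq_succ_of_ne_zero hnne
  have hprev : gammaP (F n') ≤ t := by
    have := Nat.find_min hexC (m := n') (by omega)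
    linarith [not_lt.mp this]
  have hup : gammaP (F n) < t + ε := by
    rw [hn']
    calc gammaP (F (n'+1)) ≤ gammaP (F n') + Real.log y / y := hstep n'
      _ < t + ε := by linarith
  exact ⟨F n, hFprime n, hn, hup⟩

end GammaAux

/-- `G` is dense in `[Γ, ∞)` where `Γ = inf G`: the closure of `G` equals `[Γ, ∞)`. -/
theorem closure_Gset : closure Gset = Set.Ici (sInf Gset) := by
  have hne : Gset.Nonempty := ⟨gammaP ∅, ∅, by simp, rfl⟩
  have hbdd : BddBelow Gset := by
    refine ⟨0, ?_⟩
    rintro x ⟨P, hP, rfl⟩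
    exact GammaAux.gammaP_nonneg hP
  apply subset_antisymm
  · apply closure_minimal _ isClosed_Ici
    intro x hx
    exact csInf_le hbdd hx
  · intro t ht
    rw [Metric.mem_closure_iff]
    intro ε hε
    obtain ⟨a, ⟨P0, hP0, rfl⟩, ha⟩ := Real.lt_sInf_add_pos hne hε
    rcases le_or_gt (gammaP P0) t with hle | hlt
    · obtain ⟨P, hP, h1, h2⟩ := GammaAux.reach P0 hP0 hε hle
      refine ⟨gammaP P, ⟨P, hP, rfl⟩, ?_⟩
      rw [Real.dist_eq, abs_lt]
      constructor <;> linarith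
    · refine ⟨gammaP P0, ⟨P0, hP0, rfl⟩, ?_⟩
      rw [Real.dist_eq, abs_lt]
      have h1 : sInf Gset ≤ t := ht
      constructor <;> linarith
end

section
/- For every finite set P of primes there exists an integer r with 0 ≤ r ≤ #P such that γ(P) ≥ γ_r. Consequently, Γ := inf{ γ(P) : P a finite set of primes } = inf_{r ≥ 0} γ_r. -/
open Filter

lemma key_eq (p c : ℝ) (hp : 2 ≤ p) :
    (1 - 1/p) * (c + Real.log p / (p - 1)) = ((p - 1) * c + Real.log p) / p := by
  have h1 : p ≠ 0 := by linarith
  have h2 : p - 1 ≠ 0 := by intro h; nlinarith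
  field_simp

lemma key_swap (q p c : ℝ) (hq : 2 ≤ q) (hqp : q ≤ p) (hc : Real.log p ≤ c) :
    (1 - 1/q) * (c + Real.log q / (q - 1)) ≤ (1 - 1/p) * (c + Real.log p / (p - 1)) := by
  have hp : (2:ℝ) ≤ p := le_trans hq hqp
  have hlog : Real.log q ≤ Real.log p := Real.log_le_log (by linarith) hqp
  rw [key_eq q c hq, key_eq p c hp, div_le_div_iff₀ (by linarith) (by linarith)]
  nlinarith [mul_le_mul_of_nonneg_left hlog (by linarith : (0:ℝ) ≤ p),
    mul_le_mul_of_nonneg_left hc (by linarith : (0:ℝ) ≤ p - q)]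

lemma key_drop (p c : ℝ) (hp : 2 ≤ p) (hc : c ≤ Real.log p) :
    c ≤ (1 - 1/p) * (c + Real.log p / (p - 1)) := by
  rw [key_eq p c hp, le_div_iff₀ (by linarith)]
  nlinarith

lemma prod_nonneg' (P : Finset ℕ) (hP : ∀ p ∈ P, p.Prime) :
    0 ≤ ∏ p ∈ P, (1 - 1 / (p : ℝ)) := by
  apply Finset.prod_nonneg
  intro x hx
  have h2 : (2:ℝ) ≤ x := by exact_mod_cast (hP x hx).two_le
  have : 1 / (x:ℝ) ≤ 1/2 := by
    apply one_div_le_one_div_of_le <;> linarith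
  linarith

lemma gammaP_nonneg (P : Finset ℕ) (hP : ∀ p ∈ P, p.Prime) : 0 ≤ gammaP P := by
  apply mul_nonneg (prod_nonneg' P hP)
  have h1 : (0:ℝ) ≤ Real.eulerMascheroniConstant := by
    have := Real.one_half_lt_eulerMascheroniConstant
    linarith
  have h2 : (0:ℝ) ≤ ∑ p ∈ P, Real.log p / ((p : ℝ) - 1) := by
    apply Finset.sum_nonneg
    intro x hx
    have h2 : (2:ℝ) ≤ x := by exact_mod_cast (hP x hx).two_le
    apply div_nonneg (Real.log_nonneg (by linarith)) (by linarith)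
  linarith

lemma main_aux_s2 : ∀ n : ℕ, ∀ P : Finset ℕ, (∑ p ∈ P, p) = n → (∀ p ∈ P, p.Prime) →
    ∃ r : ℕ, r ≤ P.card ∧ gammaR r ≤ gammaP P := by
  intro n
  induction n using Nat.strong_induction_on with
  | _ n ih =>
    intro P hsum hP
    by_cases hinit : ∀ i < P.card, Nat.nth Nat.Prime i ∈ P
    · -- P is an initial segment of primes
      refine ⟨P.card, le_refl _, ?_⟩
      have hsub : (Finset.range P.card).image (Nat.nth Nat.Prime) ⊆ P := by
        intro x hx
        simp only [Finset.mem_image, Finset.mem_range] at hx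
        obtain ⟨j, hj, rfl⟩ := hx
        exact hinit j hj
      have hcard : P.card ≤ ((Finset.range P.card).image (Nat.nth Nat.Prime)).card := by
        rw [Finset.card_image_of_injective _ (Nat.nth_injective Nat.infinite_setOf_prime)]
        simp
      have heq : (Finset.range P.card).image (Nat.nth Nat.Prime) = P :=
        Finset.eq_of_subset_of_card_le hsub hcard
      rw [gammaR, heq]
    · push_neg at hinit
      classical
      obtain ⟨i, hilt, hiq⟩ := hinit
      -- wlog i minimal
      have hmin := Nat.find_spec (⟨i, hilt, hiq⟩ : ∃ i, i < P.card ∧ Nat.nth Nat.Prime i ∉ P)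
      set i0 := Nat.find (⟨i, hilt, hiq⟩ : ∃ i, i < P.card ∧ Nat.nth Nat.Prime i ∉ P) with hi0
      obtain ⟨hi0lt, hi0q⟩ := hmin
      set q := Nat.nth Nat.Prime i0 with hqdef
      have hqprime : q.Prime := Nat.prime_nth_prime i0
      have hPne : P.Nonempty := Finset.card_pos.mp (lt_of_le_of_lt (Nat.zero_le i0) hi0lt)
      set p := P.max' hPne with hpdef
      have hpmem : p ∈ P := P.max'_mem hPne
      have hpprime : p.Prime := hP p hpmem
      have hqp : q < p := by
        by_contra h
        push_neg at h
        have hsub : P ⊆ (Finset.range i0).image (Nat.nth Nat.Prime) := by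
          intro x hx
          have hxp := hP x hx
          have hxle : x ≤ p := P.le_max' x hx
          have hxq : x < q := by
            rcases lt_or_eq_of_le (le_trans hxle h) with h' | h'
            · exact h'
            · exact absurd (h' ▸ hx) hi0q
          have hxeq : Nat.nth Nat.Prime (Nat.count Nat.Prime x) = x := Nat.nth_count hxp
          have : Nat.count Nat.Prime x < i0 := by
            rw [← Nat.nth_lt_nth Nat.infinite_setOf_prime, hxeq]
            exact hxq
          simp only [Finset.mem_image, Finset.mem_range]
          exact ⟨_, this, hxeq⟩
        have : P.card ≤ i0 := by
          calc P.card ≤ ((Finset.range i0).image (Nat.nth Nat.Prime)).card :=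
                Finset.card_le_card hsub
            _ ≤ i0 := le_trans Finset.card_image_le (by simp)
        omega
      -- decompositions
      set A := ∏ x ∈ P.erase p, (1 - 1 / (x:ℝ)) with hA
      set c := Real.eulerMascheroniConstant + ∑ x ∈ P.erase p, Real.log x / ((x:ℝ) - 1) with hc
      have hAnn : 0 ≤ A := prod_nonneg' _ (fun x hx => hP x (Finset.mem_of_mem_erase hx))
      have hprodP : ∏ x ∈ P, (1 - 1 / (x:ℝ)) = (1 - 1/(p:ℝ)) * A :=
        (Finset.mul_prod_erase P _ hpmem).symm
      have hsumP : ∑ x ∈ P, Real.log x / ((x:ℝ) - 1)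
          = Real.log p / ((p:ℝ) - 1) + ∑ x ∈ P.erase p, Real.log x / ((x:ℝ) - 1) :=
        (Finset.add_sum_erase P _ hpmem).symm
      have hgP : gammaP P = A * ((1 - 1/(p:ℝ)) * (c + Real.log p / ((p:ℝ) - 1))) := by
        rw [gammaP, hprodP, hsumP, hc]; ring
      have hp2 : (2:ℝ) ≤ (p:ℝ) := by exact_mod_cast hpprime.two_le
      have hq2 : (2:ℝ) ≤ (q:ℝ) := by exact_mod_cast hqprime.two_le
      have hsum_erase : (∑ x ∈ P.erase p, x) + p = n := by
        rw [← hsum]; exact Finset.sum_erase_add P _ hpmem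
      rcases le_total c (Real.log p) with hcase | hcase
      · -- drop p
        have hlt : (∑ x ∈ P.erase p, x) < n := by
          have := hpprime.two_le; omega
        obtain ⟨r, hr, hg⟩ := ih _ hlt (P.erase p) rfl
          (fun x hx => hP x (Finset.mem_of_mem_erase hx))
        refine ⟨r, le_trans hr (by exact Finset.card_le_card (Finset.erase_subset p P)), ?_⟩
        refine le_trans hg ?_
        have hgP' : gammaP (P.erase p) = A * c := rfl
        rw [hgP', hgP]
        exact mul_le_mul_of_nonneg_left (key_drop (p:ℝ) c hp2 hcase) hAnn
      · -- swap p for q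
        have hqe : q ∉ P.erase p := fun h => hi0q (Finset.mem_of_mem_erase h)
        have hlt : (∑ x ∈ insert q (P.erase p), x) < n := by
          rw [Finset.sum_insert hqe]; omega
        obtain ⟨r, hr, hg⟩ := ih _ hlt (insert q (P.erase p)) rfl
          (fun x hx => by
            rcases Finset.mem_insert.mp hx with h | h
            · exact h ▸ hqprime
            · exact hP x (Finset.mem_of_mem_erase h))
        have hcard : (insert q (P.erase p)).card = P.card := by
          rw [Finset.card_insert_of_notMem hqe, Finset.card_erase_of_mem hpmem]
          have : 1 ≤ P.card := Finset.card_pos.mpr hPne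
          omega
        refine ⟨r, hcard ▸ hr, ?_⟩
        refine le_trans hg ?_
        have hgP' : gammaP (insert q (P.erase p))
            = A * ((1 - 1/(q:ℝ)) * (c + Real.log q / ((q:ℝ) - 1))) := by
          rw [gammaP, Finset.prod_insert hqe, Finset.sum_insert hqe, hc]; ring
        rw [hgP', hgP]
        exact mul_le_mul_of_nonneg_left
          (key_swap (q:ℝ) (p:ℝ) c hq2 (by exact_mod_cast hqp.le) hcase) hAnn


/-- For every finite set `P` of primes there is `0 ≤ r ≤ #P` with `γ(P) ≥ γ_r`;
consequently `Γ = inf {γ(P)} = inf_{r ≥ 0} γ_r`. -/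
theorem gammaP_ge_gammaR :
    (∀ P : Finset ℕ, (∀ p ∈ P, p.Prime) → ∃ r : ℕ, r ≤ P.card ∧ gammaR r ≤ gammaP P) ∧
    sInf {y : ℝ | ∃ P : Finset ℕ, (∀ p ∈ P, p.Prime) ∧ gammaP P = y} = ⨅ r : ℕ, gammaR r := by
  have main : ∀ P : Finset ℕ, (∀ p ∈ P, p.Prime) → ∃ r : ℕ, r ≤ P.card ∧ gammaR r ≤ gammaP P :=
    fun P hP => main_aux_s2 _ P rfl hP
  refine ⟨main, ?_⟩
  set S := {y : ℝ | ∃ P : Finset ℕ, (∀ p ∈ P, p.Prime) ∧ gammaP P = y} with hS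
  have hRmem : ∀ r : ℕ, gammaR r ∈ S := by
    intro r
    exact ⟨(Finset.range r).image (Nat.nth Nat.Prime), by
      intro x hx
      simp only [Finset.mem_image, Finset.mem_range] at hx
      obtain ⟨j, _, rfl⟩ := hx
      exact Nat.prime_nth_prime j, rfl⟩
  have hSbdd : BddBelow S := by
    refine ⟨0, fun y hy => ?_⟩
    obtain ⟨P, hP, rfl⟩ := hy
    exact gammaP_nonneg P hP
  have hSne : S.Nonempty := ⟨gammaR 0, hRmem 0⟩
  have hRbdd : BddBelow (Set.range gammaR) := by
    refine ⟨0, fun y hy => ?_⟩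
    obtain ⟨r, rfl⟩ := hy
    obtain ⟨P, hP, heq⟩ := hRmem r
    exact heq ▸ gammaP_nonneg P hP
  apply le_antisymm
  · apply le_ciInf
    intro r
    exact csInf_le hSbdd (hRmem r)
  · apply le_csInf hSne
    intro y hy
    obtain ⟨P, hP, rfl⟩ := hy
    obtain ⟨r, _, hg⟩ := main P hP
    exact le_trans (ciInf_le hRbdd r) hg
end
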